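/- For nonnegative integers n, m, r1, r2 with r1 ≤ r2: B_{n+m}(z; r1, r2) = Σ_{j=0}^{n} {n+r2 brace j+r2}_{r2} · z^j · B_m(z; r1, r2+j), as an identity of polynomials in z. -/

import Mathlib

open Finset

/-- `𝒜` is a set partition of `Fin N`: blocks are nonempty and every element
lies in exactly one block. -/
def IsSetPartition {N : ℕ} (𝒜 : Finset (Finset (Fin N))) : Prop :=
  (∀ t ∈ 𝒜, t.Nonempty) ∧ ∀ x : Fin N, ∃! t, t ∈ 𝒜 ∧ x ∈ t

/-- The elements of `S` lie in pairwise distinct blocks of `𝒜`. -/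
def DistinctBlocks {N : ℕ} (𝒜 : Finset (Finset (Fin N))) (S : Set (Fin N)) : Prop :=
  ∀ a ∈ S, ∀ b ∈ S, a ≠ b → ∀ t ∈ 𝒜, ¬(a ∈ t ∧ b ∈ t)

/-- The `r`-Stirling number of the second kind `{n+r brace k+r}_r`: the number of
partitions of `{1,…,n+r}` into `k+r` nonempty blocks with `1,…,r` in distinct blocks. -/
noncomputable def rStirling (r n k : ℕ) : ℕ :=
  Nat.card {𝒜 : Finset (Finset (Fin (n + r))) //
    IsSetPartition 𝒜 ∧ 𝒜.card = k + r ∧ DistinctBlocks 𝒜 {x | (x : ℕ) < r}}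

/-- The `(r₁,r₂)`-Stirling number of the second kind `{n+r₁+r₂ brace k+r₂}_{r₁,r₂}`. -/
noncomputable def rrStirling (r₁ r₂ n k : ℕ) : ℕ :=
  Nat.card {𝒜 : Finset (Finset (Fin (n + r₁ + r₂))) //
    IsSetPartition 𝒜 ∧ 𝒜.card = k + r₂ ∧
    DistinctBlocks 𝒜 {x | (x : ℕ) < r₁} ∧
    DistinctBlocks 𝒜 {x | r₁ ≤ (x : ℕ) ∧ (x : ℕ) < r₁ + r₂}}

/-- The `r`-Bell polynomial `B_n(z;r) = Σ_{k=0}^n {n+r brace k+r}_r z^k`. -/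
noncomputable def rBell (r n : ℕ) (z : ℝ) : ℝ :=
  ∑ k ∈ range (n + 1), (rStirling r n k : ℝ) * z ^ k

/-- The `(r₁,r₂)`-Bell polynomial `B_n(z;r₁,r₂) = Σ_{k=0}^{n+r₁} {n+r₁+r₂ brace k+r₂}_{r₁,r₂} z^k`. -/
noncomputable def rrBell (r₁ r₂ n : ℕ) (z : ℝ) : ℝ :=
  ∑ k ∈ range (n + r₁ + 1), (rrStirling r₁ r₂ n k : ℝ) * z ^ k

/-!
Both sides satisfy the same recurrence in `n`. Removing the first ordinary point `r₁ + r₂` from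
the partitions counted by `{n+1+r₁+r₂ brace k+r₂}_{r₁,r₂}` gives
`B_{n+1}(z; r₁, r₂) = z B_n(z; r₁, r₂ + 1) + r₂ B_n(z; r₁, r₂)`: either that point is separated
from the `r₂` special points of the second kind, and then it is one more of them, or it lies in
the block of one of them. The `r`-Stirling numbers are the case `r₁ = 0`, so they satisfy the
same recurrence coefficientwise, and induction on `n`, for all `r₂` at once, gives the expansion.
-/

theorem Nat.card_subtype_and_add_card_subtype_and_not {α : Type*} [Finite α] (p q : α → Prop) :
    Nat.card {x // p x ∧ q x} + Nat.card {x // p x ∧ ¬q x} = Nat.card {x // p x} := by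
  classical
  rw [← Nat.card_congr (Equiv.subtypeSubtypeEquivSubtypeInter p q),
    ← Nat.card_congr (Equiv.subtypeSubtypeEquivSubtypeInter p (¬q ·)), ← Nat.card_sum,
    Nat.card_congr (Equiv.sumCompl _)]

section SetPartitions

variable {β γ : Type*}

def IsPartition (𝒜 : Finset (Finset β)) : Prop :=
  (∀ t ∈ 𝒜, t.Nonempty) ∧ ∀ x : β, ∃! t, t ∈ 𝒜 ∧ x ∈ t

def Separates (𝒜 : Finset (Finset β)) (S : Set β) : Prop :=
  ∀ a ∈ S, ∀ b ∈ S, a ≠ b → ∀ t ∈ 𝒜, ¬(a ∈ t ∧ b ∈ t)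

def IsSeparatingPartition (c : ℕ) (S T : Set β) (𝒜 : Finset (Finset β)) : Prop :=
  IsPartition 𝒜 ∧ 𝒜.card = c ∧ Separates 𝒜 S ∧ Separates 𝒜 T

noncomputable def partitionCount (c : ℕ) (S T : Set β) : ℕ :=
  Nat.card {𝒜 // IsSeparatingPartition c S T 𝒜}

theorem Separates.mono {𝒜 : Finset (Finset β)} {S T : Set β} (h : Separates 𝒜 S) (hTS : T ⊆ S) :
    Separates 𝒜 T :=
  fun a ha b hb => h a (hTS ha) b (hTS hb)

namespace IsPartition

variable {𝒜 : Finset (Finset β)} (h : IsPartition 𝒜)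
include h

noncomputable def block (x : β) : Finset β := (h.2 x).exists.choose

theorem block_mem (x : β) : h.block x ∈ 𝒜 := (h.2 x).exists.choose_spec.1

theorem mem_block (x : β) : x ∈ h.block x := (h.2 x).exists.choose_spec.2

theorem block_eq {x : β} {t : Finset β} (ht : t ∈ 𝒜) (hx : x ∈ t) : h.block x = t :=
  (h.2 x).unique ⟨h.block_mem x, h.mem_block x⟩ ⟨ht, hx⟩

theorem image_block [Fintype β] [DecidableEq β] : univ.image h.block = 𝒜 := by
  ext t
  refine ⟨fun ht => ?_, fun ht => ?_⟩
  · obtain ⟨x, -, rfl⟩ := mem_image.1 ht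
    exact h.block_mem x
  · obtain ⟨x, hx⟩ := h.1 t ht
    exact mem_image.2 ⟨x, mem_univ x, h.block_eq ht hx⟩

theorem card_le [Fintype β] : 𝒜.card ≤ Fintype.card β := by
  classical
  exact h.image_block ▸ card_image_le

theorem injOn_block {S : Set β} (hS : Separates 𝒜 S) : S.InjOn h.block := by
  intro a ha b hb hab
  by_contra hne
  exact hS a ha b hb hne _ (h.block_mem a) ⟨h.mem_block a, hab ▸ h.mem_block b⟩

theorem card_le_of_separates [Finite β] {S : Set β} (hS : Separates 𝒜 S) :
    Nat.card S ≤ 𝒜.card := by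
  rw [← Nat.card_eq_finsetCard]
  exact Nat.card_le_card_of_injective (fun x => ⟨h.block x, h.block_mem x⟩)
    fun a b hab => Subtype.ext (h.injOn_block hS a.2 b.2 (congrArg Subtype.val hab))

theorem eq_image_singleton [Fintype β] [DecidableEq β] (hc : 𝒜.card = Fintype.card β) :
    𝒜 = univ.image singleton := by
  have hinj : Set.InjOn h.block (univ : Finset β) := by
    rw [← card_image_iff, h.image_block, hc, card_univ]
  rw [← h.image_block]
  refine image_congr fun x _ => eq_singleton_iff_unique_mem.2 ⟨h.mem_block x, fun y hy => ?_⟩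
  exact hinj (mem_univ y) (mem_univ x) (h.block_eq (h.block_mem x) hy)

theorem separates_insert_iff {a : β} {S : Set β} :
    Separates 𝒜 (insert a S) ↔ Separates 𝒜 S ∧ ∀ b ∈ S, b ∈ h.block a → b = a := by
  refine ⟨fun hS => ⟨hS.mono (Set.subset_insert a S), fun b hb hba => ?_⟩, fun ⟨hS, ha⟩ => ?_⟩
  · by_contra hne
    exact hS a (Set.mem_insert a S) b (Set.mem_insert_of_mem a hb) (Ne.symm hne) _
      (h.block_mem a) ⟨h.mem_block a, hba⟩
  · have key : ∀ b ∈ S, b ≠ a → ∀ t ∈ 𝒜, ¬(a ∈ t ∧ b ∈ t) := fun b hb hne t ht ⟨hat, hbt⟩ =>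
      hne (ha b hb (h.block_eq ht hat ▸ hbt))
    rintro x (rfl | hx) y (rfl | hy) hxy t ht
    · exact absurd rfl hxy
    · exact key y hy (Ne.symm hxy) t ht
    · exact fun hxyt => key x hx hxy t ht hxyt.symm
    · exact hS x hx y hy hxy t ht

theorem card_blocks_meeting {T : Set β} (hT : Separates 𝒜 T) :
    Nat.card {B // B ∈ 𝒜 ∧ ∃ x ∈ T, x ∈ B} = Nat.card T := by
  refine (Nat.card_eq_of_bijective (fun x : T => ⟨h.block x, h.block_mem x, x, x.2, h.mem_block x⟩)
    ⟨fun x y hxy => Subtype.ext (h.injOn_block hT x.2 y.2 (congrArg Subtype.val hxy)), ?_⟩).symm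
  rintro ⟨B, hB, x, hxT, hxB⟩
  exact ⟨⟨x, hxT⟩, Subtype.ext (h.block_eq hB hxB)⟩

end IsPartition

theorem isSeparatingPartition_image_singleton [DecidableEq β] [Fintype β] (S T : Set β) :
    IsSeparatingPartition (Fintype.card β) S T (univ.image singleton) := by
  have hsep : ∀ S : Set β, Separates (univ.image singleton) S := by
    rintro S a - b - hab _ ht ⟨hat, hbt⟩
    obtain ⟨x, -, rfl⟩ := mem_image.1 ht
    exact hab ((mem_singleton.1 hat).trans (mem_singleton.1 hbt).symm)
  refine ⟨⟨?_, fun x => ⟨{x}, by simp, ?_⟩⟩, ?_, hsep S, hsep T⟩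
  · simp
  · rintro t ⟨ht, hxt⟩
    obtain ⟨y, -, rfl⟩ := mem_image.1 ht
    rw [mem_singleton.1 hxt]
  · rw [card_image_of_injective _ singleton_injective, card_univ]

theorem partitionCount_card_eq_one [DecidableEq β] [Fintype β] (S T : Set β) :
    partitionCount (Fintype.card β) S T = 1 :=
  Nat.card_eq_one_iff_unique.2
    ⟨⟨fun 𝒜 𝒜' => Subtype.ext ((𝒜.2.1.eq_image_singleton 𝒜.2.2.1).trans
      (𝒜'.2.1.eq_image_singleton 𝒜'.2.2.1).symm)⟩,
    ⟨⟨_, isSeparatingPartition_image_singleton S T⟩⟩⟩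

theorem partitionCount_eq_zero_of_card_lt [Fintype β] {c : ℕ} {S T : Set β}
    (hc : Fintype.card β < c) : partitionCount c S T = 0 :=
  Nat.card_eq_zero.2 <| .inl ⟨fun ⟨_, h, h𝒜, _⟩ => (h𝒜 ▸ h.card_le).not_gt hc⟩

theorem partitionCount_eq_zero_of_lt_card [Finite β] {c : ℕ} {S T : Set β}
    (hc : c < Nat.card T) : partitionCount c S T = 0 :=
  Nat.card_eq_zero.2 <| .inl ⟨fun ⟨_, h, h𝒜, _, hT⟩ => (h𝒜 ▸ h.card_le_of_separates hT).not_gt hc⟩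

theorem isPartition_map_iff (e : β ≃ γ) {𝒜 : Finset (Finset β)} :
    IsPartition (𝒜.map e.finsetCongr.toEmbedding) ↔ IsPartition 𝒜 := by
  refine and_congr (by simp only [forall_mem_map]; simp) (Iff.symm <| e.forall_congr fun x =>
    e.finsetCongr.existsUnique_congr fun t => ?_)
  simp only [mem_map_equiv, Equiv.symm_apply_apply]
  simp

theorem separates_map_iff (e : β ≃ γ) {𝒜 : Finset (Finset β)} {S : Set β} :
    Separates (𝒜.map e.finsetCongr.toEmbedding) (e '' S) ↔ Separates 𝒜 S := by
  simp only [Separates, Set.forall_mem_image, forall_mem_map, e.injective.ne_iff]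
  simp

theorem partitionCount_image_equiv (e : β ≃ γ) (c : ℕ) (S T : Set β) :
    partitionCount c (e '' S) (e '' T) = partitionCount c S T := by
  refine (Nat.card_congr (e.finsetCongr.finsetCongr.subtypeEquiv fun 𝒜 => ?_)).symm
  simp only [IsSeparatingPartition, Equiv.finsetCongr_apply, card_map, isPartition_map_iff,
    separates_map_iff]

section OptionPartitions

namespace IsPartition

variable {𝒜 : Finset (Finset (Option β))} (h : IsPartition 𝒜) (hn : {none} ∉ 𝒜)
include h hn

theorem exists_some_mem {t : Finset (Option β)} (ht : t ∈ 𝒜) : ∃ x, some x ∈ t := by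
  by_contra! hnone
  have ht_eq : t = {none} := (h.1 t ht).subset_singleton_iff.1 fun o ho => by
    cases o with
    | none => exact mem_singleton_self none
    | some x => exact absurd ho (hnone x)
  exact hn (ht_eq ▸ ht)

theorem injOn_eraseNone : Set.InjOn eraseNone (𝒜 : Set (Finset (Option β))) := by
  intro u hu v hv huv
  obtain ⟨x, hx⟩ := h.exists_some_mem hn hu
  have hxv : some x ∈ v := mem_eraseNone.1 (huv ▸ mem_eraseNone.2 hx)
  exact (h.block_eq hu hx).symm.trans (h.block_eq hv hxv)

theorem image_eraseNone [DecidableEq β] : IsPartition (𝒜.image eraseNone) := by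
  refine ⟨forall_mem_image.2 fun t ht => ?_, fun x => ⟨eraseNone (h.block (some x)),
    ⟨mem_image_of_mem _ (h.block_mem _), mem_eraseNone.2 (h.mem_block _)⟩, ?_⟩⟩
  · obtain ⟨x, hx⟩ := h.exists_some_mem hn ht
    exact ⟨x, mem_eraseNone.2 hx⟩
  · rintro _ ⟨hu', hx⟩
    obtain ⟨u, hu, rfl⟩ := mem_image.1 hu'
    rw [h.block_eq hu (mem_eraseNone.1 hx)]

end IsPartition

variable [DecidableEq β]

theorem separates_image_eraseNone {𝒜 : Finset (Finset (Option β))} {S : Set β} :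
    Separates (𝒜.image eraseNone) S ↔ Separates 𝒜 (some '' S) := by
  simp only [Separates, Set.forall_mem_image, forall_mem_image, mem_eraseNone,
    Option.some_injective _ |>.ne_iff]

theorem IsPartition.not_separates_insert_none_iff {𝒜 : Finset (Finset (Option β))}
    (h : IsPartition 𝒜) {T : Set β} (hT : Separates 𝒜 (some '' T)) :
    ¬Separates 𝒜 (insert none (some '' T)) ↔ ∃ x ∈ T, some x ∈ h.block none := by
  simp [h.separates_insert_iff, hT]

theorem IsPartition.singleton_none_notMem {𝒜 : Finset (Finset (Option β))} (h : IsPartition 𝒜)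
    {T : Set β} (hT : Separates 𝒜 (some '' T)) (hmeet : ¬Separates 𝒜 (insert none (some '' T))) :
    {none} ∉ 𝒜 := fun hmem => by
  obtain ⟨x, -, hx⟩ := (h.not_separates_insert_none_iff hT).1 hmeet
  simp [h.block_eq hmem (mem_singleton_self none)] at hx

def liftBlock (B t : Finset β) : Finset (Option β) :=
  if t = B then insertNone t else t.map Function.Embedding.some

@[simp] theorem eraseNone_liftBlock (B t : Finset β) : eraseNone (liftBlock B t) = t := by
  unfold liftBlock; split_ifs <;> simp

@[simp] theorem none_mem_liftBlock {B t : Finset β} : none ∈ liftBlock B t ↔ t = B := by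
  unfold liftBlock; split_ifs <;> simp [*]

@[simp] theorem some_mem_liftBlock {B t : Finset β} {x : β} : some x ∈ liftBlock B t ↔ x ∈ t := by
  rw [← mem_eraseNone, eraseNone_liftBlock]

def adjoinNone (𝒜 : Finset (Finset β)) (B : Finset β) : Finset (Finset (Option β)) :=
  𝒜.image (liftBlock B)

variable {𝒜 : Finset (Finset β)} {B : Finset β}

theorem image_eraseNone_adjoinNone : (adjoinNone 𝒜 B).image eraseNone = 𝒜 := by
  simp [adjoinNone, image_image, Function.comp_def]

theorem card_adjoinNone : (adjoinNone 𝒜 B).card = 𝒜.card :=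
  card_image_of_injective _ (Function.LeftInverse.injective (eraseNone_liftBlock B))

theorem separates_adjoinNone_iff {S : Set β} :
    Separates (adjoinNone 𝒜 B) (some '' S) ↔ Separates 𝒜 S := by
  rw [← separates_image_eraseNone, image_eraseNone_adjoinNone]

theorem IsPartition.adjoinNone (h : IsPartition 𝒜) (hB : B ∈ 𝒜) :
    IsPartition (adjoinNone 𝒜 B) := by
  refine ⟨forall_mem_image.2 fun t ht => ?_, fun o => ?_⟩
  · obtain ⟨x, hx⟩ := h.1 t ht
    exact ⟨some x, some_mem_liftBlock.2 hx⟩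
  · have key : ∃! t, t ∈ 𝒜 ∧ o ∈ liftBlock B t := by
      cases o with
      | none => exact ⟨B, by simp [hB]⟩
      | some x => simpa using h.2 x
    obtain ⟨t, ⟨ht, hot⟩, huniq⟩ := key
    refine ⟨liftBlock B t, ⟨mem_image_of_mem _ ht, hot⟩, ?_⟩
    rintro _ ⟨hu', hou⟩
    obtain ⟨u, hu, rfl⟩ := mem_image.1 hu'
    rw [huniq u ⟨hu, hou⟩]

theorem IsPartition.block_none_adjoinNone (hB : B ∈ 𝒜) (h : IsPartition (_root_.adjoinNone 𝒜 B)) :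
    h.block none = liftBlock B B :=
  h.block_eq (mem_image_of_mem _ hB) (none_mem_liftBlock.2 rfl)

theorem IsPartition.adjoinNone_image_eraseNone {𝒜 : Finset (Finset (Option β))}
    (h : IsPartition 𝒜) (hn : {none} ∉ 𝒜) :
    _root_.adjoinNone (𝒜.image eraseNone) (eraseNone (h.block none)) = 𝒜 := by
  rw [_root_.adjoinNone, image_image]
  conv_rhs => rw [← image_id (s := 𝒜)]
  refine image_congr fun u hu => ?_
  change liftBlock _ (eraseNone u) = u
  unfold liftBlock
  split_ifs with hu0
  · rw [h.injOn_eraseNone hn hu (h.block_mem none) hu0, insertNone_eraseNone,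
      insert_eq_of_mem (h.mem_block none)]
  · rw [map_some_eraseNone, erase_eq_of_notMem]
    exact fun hnu => hu0 (congrArg eraseNone (h.block_eq hu hnu).symm)

noncomputable def joinNoneEquiv (c : ℕ) (S T : Set β) :
    {𝒜 : Finset (Finset (Option β)) // IsSeparatingPartition c (some '' S) (some '' T) 𝒜 ∧
      ¬Separates 𝒜 (insert none (some '' T))} ≃
    Σ 𝒜 : {𝒜 : Finset (Finset β) // IsSeparatingPartition c S T 𝒜},
      {B : Finset β // B ∈ 𝒜.1 ∧ ∃ x ∈ T, x ∈ B} where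
  toFun 𝒜 :=
    have h := 𝒜.2.1.1
    have hmeet := (h.not_separates_insert_none_iff 𝒜.2.1.2.2.2).1 𝒜.2.2
    have hn := h.singleton_none_notMem 𝒜.2.1.2.2.2 𝒜.2.2
    ⟨⟨𝒜.1.image eraseNone, h.image_eraseNone hn,
        (card_image_of_injOn (h.injOn_eraseNone hn)).trans 𝒜.2.1.2.1,
        separates_image_eraseNone.2 𝒜.2.1.2.2.1, separates_image_eraseNone.2 𝒜.2.1.2.2.2⟩,
      ⟨eraseNone (h.block none), mem_image_of_mem _ (h.block_mem none),
        hmeet.imp fun _ ⟨hxT, hx⟩ => ⟨hxT, mem_eraseNone.2 hx⟩⟩⟩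
  invFun p :=
    have h := p.1.2.1.adjoinNone p.2.2.1
    have hT := separates_adjoinNone_iff.2 p.1.2.2.2.2
    ⟨adjoinNone p.1.1 p.2.1, ⟨h, card_adjoinNone.trans p.1.2.2.1,
        separates_adjoinNone_iff.2 p.1.2.2.2.1, hT⟩,
      (h.not_separates_insert_none_iff hT).2 <| by
        simpa [IsPartition.block_none_adjoinNone p.2.2.1] using p.2.2.2⟩
  left_inv 𝒜 := by
    obtain ⟨𝒜, ⟨h, -, -, hT⟩, hmeet⟩ := 𝒜
    exact Subtype.ext (h.adjoinNone_image_eraseNone (h.singleton_none_notMem hT hmeet))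
  right_inv p := by
    obtain ⟨⟨𝒜, h, -⟩, B, hB, -⟩ := p
    exact Sigma.subtype_ext (Subtype.ext image_eraseNone_adjoinNone)
      (by simp [IsPartition.block_none_adjoinNone hB])

end OptionPartitions

theorem partitionCount_option [DecidableEq β] [Fintype β] (c : ℕ) (S T : Set β) :
    partitionCount c (some '' S) (some '' T) =
      partitionCount c (some '' S) (insert none (some '' T)) +
        Nat.card T * partitionCount c S T := by
  classical
  rw [partitionCount, ← Nat.card_subtype_and_add_card_subtype_and_not _
    (fun 𝒜 => Separates 𝒜 (insert none (some '' T)))]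
  congr 1
  · refine Nat.card_congr (Equiv.subtypeEquivRight fun 𝒜 => ?_)
    exact ⟨fun ⟨⟨h, hc, hS, _⟩, hT⟩ => ⟨h, hc, hS, hT⟩,
      fun ⟨h, hc, hS, hT⟩ => ⟨⟨h, hc, hS, hT.mono (Set.subset_insert _ _)⟩, hT⟩⟩
  · rw [Nat.card_congr (joinNoneEquiv c S T), Nat.card_sigma,
      sum_congr rfl fun 𝒜 _ => 𝒜.2.1.card_blocks_meeting 𝒜.2.2.2.2, sum_const, card_univ,
      smul_eq_mul, mul_comm, Fintype.card_eq_nat_card, partitionCount]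

end SetPartitions

theorem Fin.val_succAbove {n : ℕ} (i : Fin (n + 1)) (j : Fin n) :
    (i.succAbove j : ℕ) = if (j : ℕ) < i then (j : ℕ) else j + 1 := by
  unfold Fin.succAbove
  split_ifs <;> simp_all [Fin.lt_def]

theorem image_finCongr_setOf {m n : ℕ} (h : m = n) (p : ℕ → Prop) :
    finCongr h '' {x : Fin m | p x} = {x : Fin n | p x} := by
  ext x
  simp

theorem image_finSuccEquiv'_setOf {n : ℕ} (i : Fin (n + 1)) {p : ℕ → Prop}
    (hp : ∀ k, (i : ℕ) ≤ k → ¬p k) :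
    finSuccEquiv' i '' {x : Fin (n + 1) | p x} = some '' {x : Fin n | p x} := by
  ext (_ | y)
  · simpa [Equiv.image_eq_preimage_symm] using hp i le_rfl
  · simp only [Equiv.image_eq_preimage_symm, Set.mem_preimage, finSuccEquiv'_symm_some,
      Set.mem_ofPred_eq, Fin.val_succAbove, Set.mem_image, Option.some.injEq, exists_eq_right]
    split_ifs with hy
    · rfl
    · exact iff_of_false (hp _ (by omega)) (hp _ (by omega))

theorem image_finSuccEquiv'_setOf_interval {n a b : ℕ} (i : Fin (n + 1)) (hi : (i : ℕ) = b)
    (hab : a ≤ b) :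
    finSuccEquiv' i '' {x : Fin (n + 1) | a ≤ (x : ℕ) ∧ (x : ℕ) < b + 1} =
      insert none (some '' {x : Fin n | a ≤ (x : ℕ) ∧ (x : ℕ) < b}) := by
  ext (_ | y)
  · simp [Equiv.image_eq_preimage_symm, hi, hab]
  · simp only [Equiv.image_eq_preimage_symm, Set.mem_preimage, finSuccEquiv'_symm_some,
      Set.mem_ofPred_eq, Fin.val_succAbove, Set.mem_insert_iff, reduceCtorEq, false_or,
      Set.mem_image, Option.some.injEq, exists_eq_right]
    split_ifs <;> omega

theorem Nat.card_setOf_fin_interval {N a b : ℕ} (h : a + b ≤ N) :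
    Nat.card {x : Fin N | a ≤ (x : ℕ) ∧ (x : ℕ) < a + b} = b := by
  rw [← Nat.card_image_of_injective Fin.val_injective]
  have : Fin.val '' {x : Fin N | a ≤ (x : ℕ) ∧ (x : ℕ) < a + b} = Set.Ico a (a + b) := by
    ext k
    simp only [Set.mem_image, Set.mem_ofPred_eq, Set.mem_Ico]
    exact ⟨fun ⟨x, hx, hk⟩ => hk ▸ hx, fun hk => ⟨⟨k, by omega⟩, hk, rfl⟩⟩
  simp [this]

theorem rrStirling_eq_partitionCount (r₁ r₂ n k : ℕ) :
    rrStirling r₁ r₂ n k = partitionCount (k + r₂) {x : Fin (n + r₁ + r₂) | (x : ℕ) < r₁}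
      {x | r₁ ≤ (x : ℕ) ∧ (x : ℕ) < r₁ + r₂} :=
  rfl

-- `Fin (n + 0 + r)` is definitionally `Fin (n + r)`, so both sides count the same partitions.
theorem rStirling_eq_rrStirling_zero (r n k : ℕ) : rStirling r n k = rrStirling 0 r n k :=
  Nat.card_congr <| Equiv.subtypeEquivRight fun 𝒜 => by simp [DistinctBlocks]

theorem rrStirling_eq_zero_of_lt {r₁ r₂ n k : ℕ} (h : n + r₁ < k) : rrStirling r₁ r₂ n k = 0 :=
  partitionCount_eq_zero_of_card_lt (by rw [Fintype.card_fin]; omega)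

theorem rrStirling_succ (r₁ r₂ n k : ℕ) :
    rrStirling r₁ r₂ (n + 1) k =
      partitionCount (k + r₂) {x : Fin (n + r₁ + (r₂ + 1)) | (x : ℕ) < r₁}
          {x | r₁ ≤ (x : ℕ) ∧ (x : ℕ) < r₁ + (r₂ + 1)} +
        r₂ * rrStirling r₁ r₂ n k := by
  have hN : n + 1 + r₁ + r₂ = n + r₁ + r₂ + 1 := by omega
  let i : Fin (n + r₁ + r₂ + 1) := ⟨r₁ + r₂, by omega⟩
  have hS : finSuccEquiv' i '' {x | (x : ℕ) < r₁} =
      some '' {x : Fin (n + r₁ + r₂) | (x : ℕ) < r₁} :=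
    image_finSuccEquiv'_setOf i fun k (hk : r₁ + r₂ ≤ k) (hk' : k < r₁) => by omega
  have hT : finSuccEquiv' i '' {x | r₁ ≤ (x : ℕ) ∧ (x : ℕ) < r₁ + r₂} =
      some '' {x : Fin (n + r₁ + r₂) | r₁ ≤ (x : ℕ) ∧ (x : ℕ) < r₁ + r₂} :=
    image_finSuccEquiv'_setOf i fun k (hk : r₁ + r₂ ≤ k) (hk' : r₁ ≤ k ∧ k < r₁ + r₂) => by omega
  rw [rrStirling_eq_partitionCount, ← partitionCount_image_equiv (finCongr hN),
    image_finCongr_setOf hN (· < r₁), image_finCongr_setOf hN (fun k => r₁ ≤ k ∧ k < r₁ + r₂),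
    ← partitionCount_image_equiv (finSuccEquiv' i), hS, hT, partitionCount_option, ← hS,
    ← image_finSuccEquiv'_setOf_interval i rfl (Nat.le_add_right r₁ r₂),
    partitionCount_image_equiv, Nat.card_setOf_fin_interval (by omega)]
  -- `Fin (n + r₁ + r₂ + 1)` and `Fin (n + r₁ + (r₂ + 1))` are definitionally equal
  rfl

theorem rrStirling_succ_zero (r₁ r₂ n : ℕ) :
    rrStirling r₁ r₂ (n + 1) 0 = r₂ * rrStirling r₁ r₂ n 0 := by
  rw [rrStirling_succ, partitionCount_eq_zero_of_lt_card, zero_add]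
  rw [Nat.card_setOf_fin_interval (by omega)]
  omega

theorem rrStirling_succ_succ (r₁ r₂ n k : ℕ) :
    rrStirling r₁ r₂ (n + 1) (k + 1) =
      rrStirling r₁ (r₂ + 1) n k + r₂ * rrStirling r₁ r₂ n (k + 1) := by
  rw [rrStirling_succ, Nat.add_right_comm k 1 r₂, add_assoc k]
  rfl

theorem rStirling_zero_zero (r : ℕ) : rStirling r 0 0 = 1 := by
  have h := partitionCount_card_eq_one {x : Fin (0 + 0 + r) | (x : ℕ) < 0}
    {x | 0 ≤ (x : ℕ) ∧ (x : ℕ) < 0 + r}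
  rw [Fintype.card_fin] at h
  rw [rStirling_eq_rrStirling_zero]
  exact h

theorem sum_range_succ_mul_eq_of_recurrence {a b b' f : ℕ → ℝ} {c : ℝ} {N : ℕ}
    (h0 : a 0 = c * b 0) (hs : ∀ k, a (k + 1) = b' k + c * b (k + 1)) (hN : b N = 0) :
    ∑ k ∈ range (N + 1), a k * f k =
      ∑ k ∈ range N, b' k * f (k + 1) + c * ∑ k ∈ range N, b k * f k := by
  have hb := (sum_range_succ' (fun k => b k * f k) N).symm.trans (sum_range_succ _ N)
  rw [hN, zero_mul, add_zero] at hb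
  rw [sum_range_succ', h0, ← hb, mul_add, mul_sum]
  simp only [hs, add_mul, sum_add_distrib, mul_assoc]
  ring

theorem rrBell_succ (r₁ r₂ n : ℕ) (z : ℝ) :
    rrBell r₁ r₂ (n + 1) z = z * rrBell r₁ (r₂ + 1) n z + r₂ * rrBell r₁ r₂ n z := by
  rw [rrBell, show n + 1 + r₁ + 1 = n + r₁ + 1 + 1 by omega,
    sum_range_succ_mul_eq_of_recurrence (b := fun k => (rrStirling r₁ r₂ n k : ℝ))
      (b' := fun k => (rrStirling r₁ (r₂ + 1) n k : ℝ)) (c := r₂)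
      (by simp [rrStirling_succ_zero]) (by simp [rrStirling_succ_succ])
      (by simp [rrStirling_eq_zero_of_lt])]
  rw [rrBell, rrBell, mul_sum _ _ z]
  congr 1
  exact sum_congr rfl fun k _ => by ring

theorem sum_rStirling_succ (r n : ℕ) (z : ℝ) (w : ℕ → ℝ) :
    ∑ j ∈ range (n + 1 + 1), (rStirling r (n + 1) j : ℝ) * z ^ j * w (r + j) =
      z * ∑ j ∈ range (n + 1), (rStirling (r + 1) n j : ℝ) * z ^ j * w (r + 1 + j) +
        r * ∑ j ∈ range (n + 1), (rStirling r n j : ℝ) * z ^ j * w (r + j) := by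
  simp only [mul_assoc, rStirling_eq_rrStirling_zero]
  rw [sum_range_succ_mul_eq_of_recurrence (b := fun k => (rrStirling 0 r n k : ℝ))
      (b' := fun k => (rrStirling 0 (r + 1) n k : ℝ)) (c := r)
      (by simp [rrStirling_succ_zero]) (by simp [rrStirling_succ_succ])
      (by simp [rrStirling_eq_zero_of_lt]), mul_sum _ _ z]
  congr 1
  refine sum_congr rfl fun k _ => ?_
  rw [show r + (k + 1) = r + 1 + k by omega]
  ring

theorem rrBell_shift_expansion_general (n m r₁ r₂ : ℕ) (z : ℝ) :
    rrBell r₁ r₂ (n + m) z =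
      ∑ j ∈ range (n + 1), (rStirling r₂ n j : ℝ) * z ^ j * rrBell r₁ (r₂ + j) m z := by
  induction n generalizing r₂ with
  | zero => simp [rStirling_zero_zero]
  | succ n ih =>
    rw [Nat.add_right_comm, rrBell_succ, ih, ih,
      sum_rStirling_succ r₂ n z fun j => rrBell r₁ j m z]

/-- $B_{n+m}(z;r_1,r_2) = \sum_{j=0}^n {n+r_2 \brace j+r_2}_{r_2} z^j B_m(z;r_1,r_2+j)$. -/
theorem rrBell_shift_expansion (n m r₁ r₂ : ℕ) (h : r₁ ≤ r₂) (z : ℝ) :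
    rrBell r₁ r₂ (n + m) z =
      ∑ j ∈ range (n + 1), (rStirling r₂ n j : ℝ) * z ^ j * rrBell r₁ (r₂ + j) m z :=
  rrBell_shift_expansion_general n m r₁ r₂ z
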